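/- Chomsky normal form transformation step (chain elimination): if p = (A, R) is a production whose right-hand side contains exactly one hyperedge e' with lab(e') = B ∈ N, then replacing p by the set of productions { (A, R[e'/X]) : (B, X) ∈ P } yields a grammar generating the same language, provided A ≠ B or the construction is iterated to a fixed point on productions with a single non-terminal hyperedge. -/

import Mathlib

/-- A hypergraph over a label set `C`: finite sets of vertices and hyperedges,
an attachment list and a label for each hyperedge, and a duplicate-free list of
external nodes. -/
structure HRGraph (C : Type) : Type 1 where
  V : Type
  E : Type
  finV : Finite V
  finE : Finite E
  att : E → List V
  lab : E → C
  ext : List V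
  ext_nodup : ext.Nodup

namespace HRGraph

variable {C : Type}

/-- The size `|H| = |V_H| + |E_H|` of a hypergraph. -/
noncomputable def size (H : HRGraph C) : ℕ := Nat.card H.V + Nat.card H.E

/-- Replacement `H[e/R]`: remove the hyperedge `e`, disjointly add the vertices and
hyperedges of `R`, and fuse the `i`-th external node of `R` with the `i`-th
attachment node of `e`. -/
noncomputable def replace (H : HRGraph C) (e : H.E) (R : HRGraph C)
    (hlen : R.ext.length = (H.att e).length) : HRGraph C := by
  classical
  exact
    { V := H.V ⊕ {v : R.V // v ∉ R.ext}
      E := {e' : H.E // e' ≠ e} ⊕ R.E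
      finV := by haveI := H.finV; haveI := R.finV; infer_instance
      finE := by haveI := H.finE; haveI := R.finE; infer_instance
      att := fun x =>
        match x with
        | Sum.inl e' => (H.att e'.1).map Sum.inl
        | Sum.inr f => (R.att f).map (fun v =>
            if hv : v ∈ R.ext then
              Sum.inl ((H.att e).get ⟨R.ext.idxOf v, hlen ▸ List.idxOf_lt_length_iff.mpr hv⟩)
            else Sum.inr ⟨v, hv⟩)
      lab := fun x => match x with | Sum.inl e' => H.lab e'.1 | Sum.inr f => R.lab f
      ext := H.ext.map Sum.inl
      ext_nodup := List.Nodup.map Sum.inl_injective H.ext_nodup }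

/-- Isomorphism of hypergraphs. -/
structure Iso (H K : HRGraph C) where
  vEquiv : H.V ≃ K.V
  eEquiv : H.E ≃ K.E
  att_eq : ∀ e, (H.att e).map vEquiv = K.att (eEquiv e)
  lab_eq : ∀ e, H.lab e = K.lab (eEquiv e)
  ext_eq : H.ext.map vEquiv = K.ext

def Iso.refl (H : HRGraph C) : Iso H H :=
  ⟨Equiv.refl _, Equiv.refl _, by simp, by simp, by simp⟩

def Iso.symm {H K : HRGraph C} (i : Iso H K) : Iso K H where
  vEquiv := i.vEquiv.symm
  eEquiv := i.eEquiv.symm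
  att_eq e := by
    have h := i.att_eq (i.eEquiv.symm e)
    simp only [Equiv.apply_symm_apply] at h
    rw [← h, List.map_map]
    simp
  lab_eq e := by
    have h := i.lab_eq (i.eEquiv.symm e)
    simp only [Equiv.apply_symm_apply] at h
    exact h.symm
  ext_eq := by
    rw [← i.ext_eq, List.map_map]
    simp

def Iso.trans {H K L : HRGraph C} (i : Iso H K) (j : Iso K L) : Iso H L where
  vEquiv := i.vEquiv.trans j.vEquiv
  eEquiv := i.eEquiv.trans j.eEquiv
  att_eq e := by
    simp only [Equiv.coe_trans, ← List.map_map, i.att_eq, j.att_eq]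
    rfl
  lab_eq e := (i.lab_eq e).trans (j.lab_eq (i.eEquiv e))
  ext_eq := by
    simp only [Equiv.coe_trans, ← List.map_map, i.ext_eq, j.ext_eq]

/-- HRGraphs up to isomorphism. -/
def isoSetoid (C : Type) : Setoid (HRGraph C) :=
  ⟨fun H K => Nonempty (Iso H K),
   ⟨fun H => ⟨Iso.refl H⟩, fun ⟨i⟩ => ⟨i.symm⟩, fun ⟨i⟩ ⟨j⟩ => ⟨i.trans j⟩⟩⟩

/-- The handle `A•` of a label `A` of type `n`: one hyperedge labelled `A`
attached to `n` pairwise distinct nodes, all of them external. -/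
def handle (A : C) (n : ℕ) : HRGraph C where
  V := Fin n
  E := PUnit
  finV := inferInstance
  finE := inferInstance
  att _ := List.finRange n
  lab _ := A
  ext := List.finRange n
  ext_nodup := List.nodup_finRange n

/-- `K` is (isomorphic to) the result of replacing `e` by `R` in `H`. -/
def IsRepl (H : HRGraph C) (e : H.E) (R K : HRGraph C) : Prop :=
  ∃ hlen : R.ext.length = (H.att e).length, Nonempty (Iso K (H.replace e R hlen))

/-- A direct derivation step using some production of `P`. -/
def Step (P : Set (C × HRGraph C)) (H K : HRGraph C) : Prop :=
  ∃ p ∈ P, ∃ e : H.E, H.lab e = p.1 ∧ IsRepl H e p.2 K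

/-- Derivations: the reflexive-transitive closure of `Step`. -/
def Derives (P : Set (C × HRGraph C)) : HRGraph C → HRGraph C → Prop :=
  Relation.ReflTransGen (Step P)

/-- All hyperedges of `H` carry terminal labels. -/
def TerminalGraph (Tm : Set C) (H : HRGraph C) : Prop := ∀ e : H.E, H.lab e ∈ Tm

/-- The language generated from the handle of `S` (of type `tyS`). -/
def Lang (P : Set (C × HRGraph C)) (Tm : Set C) (S : C) (tyS : ℕ) :
    Set (HRGraph C) :=
  {H | Derives P (handle S tyS) H ∧ TerminalGraph Tm H}

end HRGraph

open HRGraph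

/-!
A step with an unfolded production `(A, R[e'/X])` is a step with `(A, R)` followed by a step with
`(B, X)` at the copy of `e'`, by the composition law `H[e/R[e'/X]] ≅ H[e/R][e'/X]`. Conversely, in
a derivation of a terminal graph, the copy of `e'` created by an application of `(A, R)` carries
the non-terminal `B`, so it is rewritten later by some `(B, X)`. Replacements at distinct
hyperedges commute, so that step can be moved right after the application of `(A, R)`, and the two
steps merge into one application of `(A, R[e'/X])`; since this shortens the remaining derivation,
induction on its length finishes the argument.
-/

theorem List.idxOf_map_of_injective {α β : Type*} [DecidableEq α] [DecidableEq β]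
    {f : α → β} (hf : Function.Injective f) (l : List α) (a : α) :
    (l.map f).idxOf (f a) = l.idxOf a := by
  induction l with
  | nil => rfl
  | cons b t ih =>
    by_cases h : b = a
    · simp [h]
    · simp [ih, h, hf.ne h]

namespace HRGraph

-- so that `simp` and pattern matching see the carriers of `H.replace e R hlen` as sums
attribute [reducible] HRGraph.replace

variable {C : Type}

theorem Iso.length_att {H K : HRGraph C} (i : Iso H K) (e : H.E) :
    (K.att (i.eEquiv e)).length = (H.att e).length := by
  rw [← i.att_eq e, List.length_map]

theorem Iso.lab_symm_apply {H K : HRGraph C} (i : Iso H K) (e : K.E) :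
    H.lab (i.eEquiv.symm e) = K.lab e := by
  rw [i.lab_eq, Equiv.apply_symm_apply]

noncomputable def Iso.replaceCongrLeft {H H' : HRGraph C} (i : Iso H H') (e : H.E)
    (X : HRGraph C) (hlen : X.ext.length = (H.att e).length)
    (hlen' : X.ext.length = (H'.att (i.eEquiv e)).length) :
    Iso (H.replace e X hlen) (H'.replace (i.eEquiv e) X hlen') where
  vEquiv := Equiv.sumCongr i.vEquiv (Equiv.refl _)
  eEquiv := Equiv.sumCongr (i.eEquiv.subtypeEquiv fun _ => i.eEquiv.injective.ne_iff.symm)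
    (Equiv.refl _)
  att_eq
    | Sum.inl f => by simp [← i.att_eq f.1]
    | Sum.inr g => by
        simp only [Equiv.sumCongr_apply, Sum.map_inr, List.map_map]
        refine List.map_congr_left fun v _ => ?_
        by_cases hv : v ∈ X.ext <;> simp [hv, ← i.att_eq e]
  lab_eq
    | Sum.inl f => i.lab_eq f.1
    | Sum.inr _ => rfl
  ext_eq := by simp [← i.ext_eq]

section Assoc

variable (H : HRGraph C) (e : H.E) (R : HRGraph C) (e' : R.E) (X : HRGraph C)
  (hX : X.ext.length = (R.att e').length)
  (hRX : (R.replace e' X hX).ext.length = (H.att e).length)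
  (hR : R.ext.length = (H.att e).length)
  (hX' : X.ext.length = ((H.replace e R hR).att (Sum.inr e')).length)

noncomputable def replaceAssocV :
    (H.replace e (R.replace e' X hX) hRX).V ≃
      ((H.replace e R hR).replace (Sum.inr e') X hX').V where
  toFun
    | Sum.inl v => Sum.inl (Sum.inl v)
    | Sum.inr ⟨Sum.inl r, hr⟩ => Sum.inl (Sum.inr ⟨r, fun h => hr (List.mem_map_of_mem h)⟩)
    | Sum.inr ⟨Sum.inr w, _⟩ => Sum.inr w
  invFun
    | Sum.inl (Sum.inl v) => Sum.inl v
    | Sum.inl (Sum.inr ⟨r, hr⟩) => Sum.inr ⟨Sum.inl r, by simpa using hr⟩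
    | Sum.inr w => Sum.inr ⟨Sum.inr w, by simp⟩
  left_inv := by rintro (v | ⟨r | w, hr⟩) <;> rfl
  right_inv := by rintro ((v | ⟨r, hr⟩) | w) <;> rfl

noncomputable def replaceAssocE :
    (H.replace e (R.replace e' X hX) hRX).E ≃
      ((H.replace e R hR).replace (Sum.inr e') X hX').E where
  toFun
    | Sum.inl f => Sum.inl ⟨Sum.inl f, Sum.inl_ne_inr⟩
    | Sum.inr (Sum.inl g) => Sum.inl ⟨Sum.inr g.1, fun h => g.2 (Sum.inr.inj h)⟩
    | Sum.inr (Sum.inr x) => Sum.inr x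
  invFun
    | Sum.inl ⟨Sum.inl f, _⟩ => Sum.inl f
    | Sum.inl ⟨Sum.inr g, hg⟩ => Sum.inr (Sum.inl ⟨g, fun h => hg (congrArg Sum.inr h)⟩)
    | Sum.inr x => Sum.inr (Sum.inr x)
  left_inv := by rintro (f | g | x) <;> rfl
  right_inv := by rintro (⟨f | g, h⟩ | x) <;> rfl

open Classical in
noncomputable def replaceAssoc :
    Iso (H.replace e (R.replace e' X hX) hRX) ((H.replace e R hR).replace (Sum.inr e') X hX') where
  vEquiv := replaceAssocV H e R e' X hX hRX hR hX'
  eEquiv := replaceAssocE H e R e' X hX hRX hR hX'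
  att_eq
    | Sum.inl f => by simp [replaceAssocV, replaceAssocE]
    | Sum.inr (Sum.inl g) => by
        simp only [replaceAssocE, Equiv.coe_fn_mk, List.map_map]
        refine List.map_congr_left fun r _ => ?_
        by_cases hr : r ∈ R.ext <;>
          simp [hr, replaceAssocV, List.idxOf_map_of_injective Sum.inl_injective]
    | Sum.inr (Sum.inr x) => by
        simp only [replaceAssocE, Equiv.coe_fn_mk, List.map_map]
        refine List.map_congr_left fun w _ => ?_
        by_cases hw : w ∈ X.ext
        · simp only [replaceAssocV, Equiv.coe_fn_mk, List.mem_map,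
            List.get_eq_getElem, Function.comp_apply, hw, ↓reduceDIte, Sum.inl.injEq,
            exists_eq_right, List.idxOf_map_of_injective Sum.inl_injective, List.getElem_map]
          split_ifs <;> rfl
        · simp [hw, replaceAssocV]
  lab_eq
    | Sum.inl _ | Sum.inr (Sum.inl _) | Sum.inr (Sum.inr _) => rfl
  ext_eq := by simp [replaceAssocV]

end Assoc

section Comm

variable (H : HRGraph C) (f g : H.E) (hfg : f ≠ g) (hgf : g ≠ f) (Y X : HRGraph C)
  (hY : Y.ext.length = (H.att f).length) (hX : X.ext.length = (H.att g).length)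
  (hX' : X.ext.length = ((H.replace f Y hY).att (Sum.inl ⟨g, hgf⟩)).length)
  (hY' : Y.ext.length = ((H.replace g X hX).att (Sum.inl ⟨f, hfg⟩)).length)

noncomputable def replaceCommV :
    ((H.replace f Y hY).replace (Sum.inl ⟨g, hgf⟩) X hX').V ≃
      ((H.replace g X hX).replace (Sum.inl ⟨f, hfg⟩) Y hY').V where
  toFun
    | Sum.inl (Sum.inl v) => Sum.inl (Sum.inl v)
    | Sum.inl (Sum.inr y) => Sum.inr y
    | Sum.inr x => Sum.inl (Sum.inr x)
  invFun
    | Sum.inl (Sum.inl v) => Sum.inl (Sum.inl v)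
    | Sum.inl (Sum.inr x) => Sum.inr x
    | Sum.inr y => Sum.inl (Sum.inr y)
  left_inv := by rintro ((v | y) | x) <;> rfl
  right_inv := by rintro ((v | x) | y) <;> rfl

noncomputable def replaceCommE :
    ((H.replace f Y hY).replace (Sum.inl ⟨g, hgf⟩) X hX').E ≃
      ((H.replace g X hX).replace (Sum.inl ⟨f, hfg⟩) Y hY').E where
  toFun
    | Sum.inl ⟨Sum.inl d, hd⟩ => Sum.inl ⟨Sum.inl ⟨d.1, fun h => hd (by subst h; rfl)⟩,
        fun h => d.2 (congrArg Subtype.val (Sum.inl.inj h))⟩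
    | Sum.inl ⟨Sum.inr y, _⟩ => Sum.inr y
    | Sum.inr x => Sum.inl ⟨Sum.inr x, Sum.inr_ne_inl⟩
  invFun
    | Sum.inl ⟨Sum.inl d, hd⟩ => Sum.inl ⟨Sum.inl ⟨d.1, fun h => hd (by subst h; rfl)⟩,
        fun h => d.2 (congrArg Subtype.val (Sum.inl.inj h))⟩
    | Sum.inl ⟨Sum.inr x, _⟩ => Sum.inr x
    | Sum.inr y => Sum.inl ⟨Sum.inr y, Sum.inr_ne_inl⟩
  left_inv := by rintro (⟨d | y, hd⟩ | x) <;> rfl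
  right_inv := by rintro (⟨d | x, hd⟩ | y) <;> rfl

noncomputable def replaceComm :
    Iso ((H.replace f Y hY).replace (Sum.inl ⟨g, hgf⟩) X hX')
      ((H.replace g X hX).replace (Sum.inl ⟨f, hfg⟩) Y hY') where
  vEquiv := replaceCommV H f g hfg hgf Y X hY hX hX' hY'
  eEquiv := replaceCommE H f g hfg hgf Y X hY hX hX' hY'
  att_eq
    | Sum.inl ⟨Sum.inl d, _⟩ => by simp [replaceCommV, replaceCommE]
    | Sum.inl ⟨Sum.inr y, _⟩ => by
        simp only [replaceCommE, Equiv.coe_fn_mk, List.map_map]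
        refine List.map_congr_left fun v _ => ?_
        by_cases hv : v ∈ Y.ext <;> simp [hv, replaceCommV]
    | Sum.inr x => by
        simp only [replaceCommE, Equiv.coe_fn_mk, List.map_map]
        refine List.map_congr_left fun w _ => ?_
        by_cases hw : w ∈ X.ext <;> simp [hw, replaceCommV]
  lab_eq
    | Sum.inl ⟨Sum.inl _, _⟩ | Sum.inl ⟨Sum.inr _, _⟩ | Sum.inr _ => rfl
  ext_eq := by simp [replaceCommV]

end Comm

section IsRepl

variable {H Z : HRGraph C} {e : H.E} {X : HRGraph C}

theorem isRepl_replace (hlen : X.ext.length = (H.att e).length) :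
    IsRepl H e X (H.replace e X hlen) :=
  ⟨hlen, ⟨Iso.refl _⟩⟩

theorem IsRepl.iso_left {H' : HRGraph C} (i : Iso H H') (h : IsRepl H e X Z) :
    IsRepl H' (i.eEquiv e) X Z := by
  obtain ⟨hlen, ⟨j⟩⟩ := h
  have hlen' : X.ext.length = (H'.att (i.eEquiv e)).length := by rw [i.length_att]; exact hlen
  exact ⟨hlen', ⟨j.trans (i.replaceCongrLeft e X hlen hlen')⟩⟩

theorem IsRepl.of_iso_symm_apply {H' : HRGraph C} (i : Iso H' H)
    (h : IsRepl H' (i.eEquiv.symm e) X Z) : IsRepl H e X Z := by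
  simpa using h.iso_left i

theorem isRepl_replace_iff {R : HRGraph C} {e' : R.E} (hR : R.ext.length = (H.att e).length)
    (hX : X.ext.length = (R.att e').length) :
    IsRepl H e (R.replace e' X hX) Z ↔ IsRepl (H.replace e R hR) (Sum.inr e') X Z := by
  constructor
  · rintro ⟨hRX, ⟨i⟩⟩
    have hX' : X.ext.length = ((H.replace e R hR).att (Sum.inr e')).length := by simpa using hX
    exact ⟨hX', ⟨i.trans (replaceAssoc H e R e' X hX hRX hR hX')⟩⟩
  · rintro ⟨hX', ⟨i⟩⟩
    have hRX : (R.replace e' X hX).ext.length = (H.att e).length := by simpa using hR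
    exact ⟨hRX, ⟨i.trans (replaceAssoc H e R e' X hX hRX hR hX').symm⟩⟩

theorem IsRepl.replace_comm {f : H.E} {Y : HRGraph C} (hfe : f ≠ e)
    (hY : Y.ext.length = (H.att f).length)
    (h : IsRepl (H.replace f Y hY) (Sum.inl ⟨e, hfe.symm⟩) X Z) :
    ∃ hX : X.ext.length = (H.att e).length,
      IsRepl (H.replace e X hX) (Sum.inl ⟨f, hfe⟩) Y Z := by
  obtain ⟨hX', ⟨i⟩⟩ := h
  have hX : X.ext.length = (H.att e).length := by simpa using hX'
  have hY' : Y.ext.length = ((H.replace e X hX).att (Sum.inl ⟨f, hfe⟩)).length := by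
    simpa using hY
  exact ⟨hX, hY', ⟨i.trans (replaceComm H f e hfe hfe.symm Y X hY hX hX' hY')⟩⟩

end IsRepl

inductive DerivesIn (P : Set (C × HRGraph C)) : ℕ → HRGraph C → HRGraph C → Prop
  | refl (H : HRGraph C) : DerivesIn P 0 H H
  | head {H H' K : HRGraph C} {n : ℕ} :
      Step P H H' → DerivesIn P n H' K → DerivesIn P (n + 1) H K

variable {P : Set (C × HRGraph C)} {Tm : Set C}

theorem Derives.exists_derivesIn {H K : HRGraph C} (h : Derives P H K) :
    ∃ n, DerivesIn P n H K := by
  induction h using Relation.ReflTransGen.head_induction_on with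
  | refl => exact ⟨0, .refl _⟩
  | head s _ ih =>
    obtain ⟨n, d⟩ := ih
    exact ⟨n + 1, .head s d⟩

theorem DerivesIn.exists_isRepl_first {B : C} (hB : B ∉ Tm) {n : ℕ} {H K : HRGraph C}
    (d : DerivesIn P n H K) (hK : TerminalGraph Tm K) (e : H.E) (he : H.lab e = B) :
    ∃ X, (B, X) ∈ P ∧ ∃ Z, IsRepl H e X Z ∧ ∃ m < n, DerivesIn P m Z K := by
  induction d with
  | refl => exact absurd (he ▸ hK e) hB
  | @head H H' K n s d ih =>
    obtain ⟨p, hp, f, hf, hrep⟩ := s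
    by_cases hfe : f = e
    · subst hfe
      have hpB : p = (B, p.2) := Prod.ext (hf.symm.trans he) rfl
      exact ⟨p.2, hpB ▸ hp, H', hrep, n, n.lt_succ_self, d⟩
    · obtain ⟨hY, ⟨i⟩⟩ := hrep
      obtain ⟨X, hX, Z, hZ, m, hm, dZ⟩ :=
        ih hK _ ((i.lab_symm_apply (Sum.inl ⟨e, Ne.symm hfe⟩)).trans he)
      obtain ⟨hXe, hstep⟩ := (hZ.of_iso_symm_apply i).replace_comm hfe hY
      exact ⟨X, hX, _, isRepl_replace hXe, m + 1, by omega,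
        .head ⟨p, hp, Sum.inl ⟨f, hfe⟩, hf, hstep⟩ dZ⟩

def unfoldProduction (P : Set (C × HRGraph C)) (A B : C) (R : HRGraph C) (e' : R.E) :
    Set (C × HRGraph C) :=
  (P \ {(A, R)}) ∪
    {q | ∃ X : HRGraph C, (B, X) ∈ P ∧
      ∃ hlen : X.ext.length = (R.att e').length, q = (A, R.replace e' X hlen)}

variable {A B : C} {R : HRGraph C} {e' : R.E}

theorem Step.derives_of_unfoldProduction (hp : (A, R) ∈ P) (hlab : R.lab e' = B)
    {H K : HRGraph C} (s : Step (unfoldProduction P A B R e') H K) : Derives P H K := by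
  obtain ⟨q, hq | ⟨X, hX, hXe, rfl⟩, e, he, hrep⟩ := s
  · exact .single ⟨q, hq.1, e, he, hrep⟩
  · have hR : R.ext.length = (H.att e).length := by simpa using hrep.1
    exact .head ⟨(A, R), hp, e, he, isRepl_replace hR⟩
      (.single ⟨(B, X), hX, Sum.inr e', hlab, (isRepl_replace_iff hR hXe).1 hrep⟩)

theorem Derives.of_unfoldProduction (hp : (A, R) ∈ P) (hlab : R.lab e' = B) {H K : HRGraph C}
    (d : Derives (unfoldProduction P A B R e') H K) : Derives P H K := by
  induction d with
  | refl => exact .refl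
  | tail _ s ih => exact ih.trans (s.derives_of_unfoldProduction hp hlab)

theorem DerivesIn.derives_unfoldProduction (hlab : R.lab e' = B) (hB : B ∉ Tm) {n : ℕ}
    {H K : HRGraph C} (d : DerivesIn P n H K) (hK : TerminalGraph Tm K) :
    Derives (unfoldProduction P A B R e') H K := by
  induction n using Nat.strong_induction_on generalizing H with
  | _ n ih =>
    cases d with
    | refl => exact .refl
    | @head _ H' _ n s d =>
      obtain ⟨p, hp, e, he, hrep⟩ := s
      by_cases hpAR : p = (A, R)
      · subst hpAR
        obtain ⟨hR, ⟨i⟩⟩ := hrep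
        obtain ⟨X, hX, Z, hZ, m, hm, dZ⟩ :=
          d.exists_isRepl_first hB hK _ ((i.lab_symm_apply (Sum.inr e')).trans hlab)
        have hZ' := hZ.of_iso_symm_apply i
        have hXe : X.ext.length = (R.att e').length := by simpa using hZ'.1
        exact .head ⟨_, Or.inr ⟨X, hX, hXe, rfl⟩, e, he, (isRepl_replace_iff hR hXe).2 hZ'⟩
          (ih m (by omega) dZ)
      · exact .head ⟨p, Or.inl ⟨hp, hpAR⟩, e, he, hrep⟩ (ih n (by omega) d)

end HRGraph

theorem chain_elimination_general {C : Type} (Tm : Set C)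
    (P : Set (C × HRGraph C)) (S : C) (tyS : ℕ)
    (A B : C) (R : HRGraph C) (hp : (A, R) ∈ P)
    (e' : R.E)
    (hlab : R.lab e' = B) (hBnt : B ∉ Tm) :
    HRGraph.Lang
      ((P \ {(A, R)}) ∪
        {q | ∃ X : HRGraph C, (B, X) ∈ P ∧
          ∃ hlen : X.ext.length = (R.att e').length,
            q = (A, R.replace e' X hlen)})
      Tm S tyS
      = HRGraph.Lang P Tm S tyS := by
  ext K
  constructor
  · rintro ⟨hder, hK⟩
    exact ⟨hder.of_unfoldProduction hp hlab, hK⟩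
  · rintro ⟨hder, hK⟩
    obtain ⟨n, d⟩ := hder.exists_derivesIn
    exact ⟨d.derives_unfoldProduction hlab hBnt hK, hK⟩

/-- Chomsky normal form transformation step (chain
elimination): if `p = (A, R)` is a production whose right-hand side contains
exactly one hyperedge `e'`, which carries a non-terminal label `B` with
`A ≠ B`, then replacing `p` by the set of productions
`{ (A, R[e'/X]) : (B, X) ∈ P }` yields a grammar generating the same
language. -/
theorem chain_elimination {C : Type} (Tm : Set C)
    (P : Set (C × HRGraph C)) (S : C) (tyS : ℕ)
    (A B : C) (R : HRGraph C) (hp : (A, R) ∈ P)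
    (e' : R.E) (huniq : ∀ e : R.E, e = e')
    (hlab : R.lab e' = B) (hBnt : B ∉ Tm) (hAB : A ≠ B) :
    HRGraph.Lang
      ((P \ {(A, R)}) ∪
        {q | ∃ X : HRGraph C, (B, X) ∈ P ∧
          ∃ hlen : X.ext.length = (R.att e').length,
            q = (A, R.replace e' X hlen)})
      Tm S tyS
      = HRGraph.Lang P Tm S tyS :=
  chain_elimination_general Tm P S tyS A B R hp e' hlab hBnt
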